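/- Let B be a Banach algebra with unit e and G a closed subgroup of B^×. Let g ∈ B with ‖g − e‖ < 1, and let log(g) = Σ_{n≥1} (−1)^{n+1}(g − e)ⁿ/n be the logarithm given by the convergent power series. If log(g) ∈ L(G), then g ∈ G. -/

import Mathlib

open Filter NormedSpace
open scoped Topology

/-- The set of tangent vectors at the identity of `G ⊆ B`: derivatives at `0` of paths
drawn on `G`, defined on an open interval containing `0`, differentiable at `0`,
passing through the identity at `0`. -/
def tangentSet {B : Type*} [NormedRing B] [NormedAlgebra ℝ B] (G : Set B) : Set B :=
  {u : B | ∃ (a b : ℝ) (γ : ℝ → B), a < 0 ∧ 0 < b ∧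
    (∀ t ∈ Set.Ioo a b, γ t ∈ G) ∧ γ 0 = 1 ∧ HasDerivAt γ u 0}

/- ### Auxiliary lemmas -/

lemma aux_norm_one_add_pow_sub_one {B : Type*} [NormedRing B] (d : B) (i : ℕ) :
    ‖(1 + d) ^ i - 1‖ ≤ (1 + ‖d‖) ^ i - 1 := by
  induction i with
  | zero => simp
  | succ i ih =>
    have h : (1 + d) ^ (i + 1) - 1 = ((1 + d) ^ i - 1) + ((1 + d) ^ i - 1) * d + d := by
      rw [pow_succ]; noncomm_ring
    rw [h]
    have h2 : (1 + ‖d‖) ^ (i + 1) - 1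
        = ((1 + ‖d‖) ^ i - 1) + ((1 + ‖d‖) ^ i - 1) * ‖d‖ + ‖d‖ := by
      rw [pow_succ]; ring
    rw [h2]
    have hnn : (0:ℝ) ≤ (1 + ‖d‖) ^ i - 1 := by
      have h := one_le_pow₀ (a := 1 + ‖d‖) (by linarith [norm_nonneg d] : (1:ℝ) ≤ 1 + ‖d‖) (n := i)
      linarith
    calc ‖((1 + d) ^ i - 1) + ((1 + d) ^ i - 1) * d + d‖
        ≤ ‖(1 + d) ^ i - 1‖ + ‖((1 + d) ^ i - 1) * d‖ + ‖d‖ := norm_add₃_le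
      _ ≤ ((1 + ‖d‖) ^ i - 1) + ((1 + ‖d‖) ^ i - 1) * ‖d‖ + ‖d‖ := by
          have := norm_mul_le ((1 + d) ^ i - 1) d
          have h3 : ‖(1 + d) ^ i - 1‖ * ‖d‖ ≤ ((1 + ‖d‖) ^ i - 1) * ‖d‖ :=
            mul_le_mul_of_nonneg_right ih (norm_nonneg d)
          linarith

lemma aux_pow_norm_le {B : Type*} [NormedRing B] {y : B} {n i : ℕ} {C : ℝ}
    (hy : ‖y - 1‖ * n ≤ C) (hi : i ≤ n) : ‖y ^ i‖ ≤ ‖(1 : B)‖ + Real.exp C := by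
  set d := y - 1 with hd
  have hy1 : y = 1 + d := by rw [hd]; abel
  have h1 : ‖y ^ i - 1‖ ≤ (1 + ‖d‖) ^ i - 1 := by
    rw [hy1]; exact aux_norm_one_add_pow_sub_one d i
  have h2 : (1 + ‖d‖) ^ i ≤ Real.exp C := by
    calc (1 + ‖d‖) ^ i ≤ (Real.exp ‖d‖) ^ i := by
          apply pow_le_pow_left₀ (by positivity)
          linarith [Real.add_one_le_exp ‖d‖]
      _ = Real.exp (i * ‖d‖) := (Real.exp_nat_mul _ i).symm
      _ ≤ Real.exp C := by
          apply Real.exp_le_exp.2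
          calc (i : ℝ) * ‖d‖ ≤ (n : ℝ) * ‖d‖ :=
                mul_le_mul_of_nonneg_right (Nat.cast_le.2 hi) (norm_nonneg d)
            _ = ‖d‖ * n := by ring
            _ ≤ C := hy
  calc ‖y ^ i‖ = ‖y ^ i - 1 + 1‖ := by rw [sub_add_cancel]
    _ ≤ ‖y ^ i - 1‖ + ‖(1 : B)‖ := norm_add_le _ _
    _ ≤ ‖(1 : B)‖ + Real.exp C := by linarith

lemma aux_norm_pow_sub_pow_le {B : Type*} [NormedRing B] (a b : B) (D : ℝ) (n : ℕ)
    (ha : ∀ i ≤ n, ‖a ^ i‖ ≤ D) (hb : ∀ i ≤ n, ‖b ^ i‖ ≤ D) :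
    ‖a ^ n - b ^ n‖ ≤ n * (D * D) * ‖a - b‖ := by
  have hD0 : 0 ≤ D := (norm_nonneg _).trans (ha 0 (Nat.zero_le n))
  have aux : ∀ k, ∀ m, k + m ≤ n → ‖(a ^ k - b ^ k) * b ^ m‖ ≤ k * (D * D) * ‖a - b‖ := by
    intro k
    induction k with
    | zero => intro m _; simp
    | succ k ih =>
      intro m hkm
      have hsplit : (a ^ (k + 1) - b ^ (k + 1)) * b ^ m
          = a ^ k * (a - b) * b ^ m + (a ^ k - b ^ k) * b ^ (m + 1) := by
        rw [pow_succ a, pow_succ b k, pow_succ' b m]; noncomm_ring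
      rw [hsplit]
      have h1 : ‖a ^ k * (a - b) * b ^ m‖ ≤ D * ‖a - b‖ * D := by
        calc ‖a ^ k * (a - b) * b ^ m‖ ≤ ‖a ^ k * (a - b)‖ * ‖b ^ m‖ := norm_mul_le _ _
          _ ≤ (‖a ^ k‖ * ‖a - b‖) * ‖b ^ m‖ :=
              mul_le_mul_of_nonneg_right (norm_mul_le _ _) (norm_nonneg _)
          _ ≤ (D * ‖a - b‖) * D := by
              apply mul_le_mul _ (hb m (by omega)) (norm_nonneg _) (by positivity)
              exact mul_le_mul_of_nonneg_right (ha k (by omega)) (norm_nonneg _)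
      have h2 := ih (m + 1) (by omega)
      calc ‖a ^ k * (a - b) * b ^ m + (a ^ k - b ^ k) * b ^ (m + 1)‖
          ≤ ‖a ^ k * (a - b) * b ^ m‖ + ‖(a ^ k - b ^ k) * b ^ (m + 1)‖ := norm_add_le _ _
        _ ≤ D * ‖a - b‖ * D + k * (D * D) * ‖a - b‖ := add_le_add h1 h2
        _ = (k + 1 : ℕ) * (D * D) * ‖a - b‖ := by push_cast; ring
  have := aux n 0 (by omega)
  simpa using this

/-- `exp ∘ log = id` near `1` in a commutative Banach algebra. -/
lemma aux_exp_log {A : Type*} [NormedCommRing A] [NormedAlgebra ℝ A] [CompleteSpace A]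
    (x : A) (hx : ‖x‖ < 1) :
    NormedSpace.exp (∑' n : ℕ, ((-1 : ℝ) ^ n / (n + 1)) • x ^ (n + 1)) = 1 + x := by
  rcases eq_or_ne x 0 with rfl | hx0
  · simp [NormedSpace.exp_zero]
  have hc0 : 0 < ‖x‖ := norm_pos_iff.2 hx0
  set c : ℝ := ‖x‖ with hc
  set R : ℝ := (1 + c⁻¹) / 2 with hR
  have hcinv : 1 < c⁻¹ := (one_lt_inv₀ hc0).2 hx
  have hR1 : 1 < R := by rw [hR]; linarith
  have hR0 : 0 < R := by linarith
  set q : ℝ := R * c with hq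
  have hq1 : q < 1 := by
    rw [hq, hR]
    have : (1 + c⁻¹) / 2 * c = (c + 1) / 2 := by field_simp
    rw [this]; linarith
  have hq0 : 0 ≤ q := by positivity
  set F : ℕ → ℝ → A := fun n t => (((-1 : ℝ) ^ n / (n + 1)) * t ^ (n + 1)) • x ^ (n + 1) with hF
  set F' : ℕ → ℝ → A := fun n t => (((-1 : ℝ) ^ n) * t ^ n) • x ^ (n + 1) with hF'
  have hderiv : ∀ (n : ℕ) (t : ℝ), HasDerivAt (F n) (F' n t) t := by
    intro n t
    have h1 : HasDerivAt (fun t : ℝ => ((-1 : ℝ) ^ n / (n + 1)) * t ^ (n + 1))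
        (((-1 : ℝ) ^ n / (n + 1)) * ((n + 1 : ℕ) * t ^ n)) t :=
      (hasDerivAt_pow (n + 1) t).const_mul _
    have h2 := h1.smul_const (x ^ (n + 1))
    have hne : ((n : ℝ) + 1) ≠ 0 := by positivity
    have hscalar : ((-1 : ℝ) ^ n / ((n : ℝ) + 1)) * ((((n : ℕ) + 1 : ℕ) : ℝ) * t ^ n)
        = (-1 : ℝ) ^ n * t ^ n := by
      push_cast
      field_simp
    rw [hF']
    simp only
    rw [← hscalar]
    exact h2
  have hbound : ∀ (n : ℕ) (t : ℝ), t ∈ Metric.ball (0 : ℝ) R → ‖F' n t‖ ≤ c * q ^ n := by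
    intro n t ht
    have ht' : |t| ≤ R := by
      rw [Metric.mem_ball, Real.dist_eq, sub_zero] at ht
      exact ht.le
    have h1 : |(-1 : ℝ) ^ n * t ^ n| ≤ R ^ n := by
      rw [abs_mul, abs_pow, abs_pow, abs_neg, abs_one, one_pow, one_mul]
      exact pow_le_pow_left₀ (abs_nonneg t) ht' n
    have h2 : ‖x ^ (n + 1)‖ ≤ c ^ (n + 1) := norm_pow_le' x n.succ_pos
    calc ‖F' n t‖ = |(-1 : ℝ) ^ n * t ^ n| * ‖x ^ (n + 1)‖ := by
          rw [hF', norm_smul, Real.norm_eq_abs]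
      _ ≤ R ^ n * c ^ (n + 1) := mul_le_mul h1 h2 (norm_nonneg _) (by positivity)
      _ = c * q ^ n := by rw [hq, mul_pow, pow_succ]; ring
  have hu : Summable (fun n : ℕ => c * q ^ n) :=
    (summable_geometric_of_lt_one hq0 hq1).mul_left c
  have hF0 : ∀ n, F n 0 = 0 := by intro n; simp [hF]
  have hsummand0 : Summable (fun n => F n 0) := by
    simp only [hF0]; exact summable_zero
  have hball : IsPreconnected (Metric.ball (0 : ℝ) R) := (convex_ball _ _).isPreconnected
  have hderiv_tsum : ∀ t ∈ Metric.ball (0 : ℝ) R,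
      HasDerivAt (fun z => ∑' n, F n z) (∑' n, F' n t) t := by
    intro t ht
    exact hasDerivAt_tsum_of_isPreconnected hu Metric.isOpen_ball hball
      (fun n y _ => hderiv n y) hbound (Metric.mem_ball_self hR0) hsummand0 ht
  set f : ℝ → A := fun z => ∑' n, F n z with hf
  set S : ℝ → A := fun t => ∑' n, F' n t with hS
  have hSsum : ∀ t ∈ Metric.ball (0 : ℝ) R, Summable (fun n => F' n t) := by
    intro t ht
    exact Summable.of_norm (hu.of_nonneg_of_le (fun n => norm_nonneg _)
      (fun n => hbound n t ht))
  have key : ∀ t ∈ Metric.ball (0 : ℝ) R, S t * (1 + t • x) = x := by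
    intro t ht
    have hs := hSsum t ht
    have h1 : S t * (t • x) = ∑' n, F' n t * (t • x) := (hs.tsum_mul_right _).symm
    have h2 : ∀ n, F' n t * (t • x) = -(F' (n + 1) t) := by
      intro n
      rw [hF']
      simp only
      rw [smul_mul_assoc, mul_smul_comm, smul_smul, ← pow_succ, ← neg_smul]
      congr 1
      ring
    have h5 : S t * (t • x) = -(S t - F' 0 t) := by
      rw [h1]
      have heq : (fun n => F' n t * (t • x)) = fun n => -(F' (n + 1) t) := funext h2
      rw [heq, tsum_neg]
      congr 1
      show (∑' n, F' (n + 1) t) = (∑' n, F' n t) - F' 0 t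
      rw [Summable.tsum_eq_zero_add hs]
      abel
    have h4 : F' 0 t = x := by rw [hF']; simp
    calc S t * (1 + t • x) = S t + S t * (t • x) := by rw [mul_add, mul_one]
      _ = x := by rw [h5, h4]; abel
  set Φ : ℝ → A := fun t => NormedSpace.exp (-(f t)) * (1 + t • x) with hΦ
  have hΦderiv : ∀ t ∈ Metric.ball (0 : ℝ) R, HasDerivAt Φ 0 t := by
    intro t ht
    have hft := hderiv_tsum t ht
    have hexp : HasDerivAt (fun s => NormedSpace.exp (-(f s)))
        (NormedSpace.exp (-(f t)) * (-(S t))) t := by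
      have h := (hasFDerivAt_exp (𝕂 := ℝ) (x := -(f t))).comp_hasDerivAt t hft.neg
      simpa [Function.comp_def, hS] using h
    have hlin : HasDerivAt (fun s : ℝ => 1 + s • x) x t := by
      simpa using ((hasDerivAt_id t).smul_const x).const_add 1
    have hmul := hexp.mul hlin
    convert hmul using 1
    · exact funext fun s => rfl
    have hkey := key t ht
    rw [mul_assoc, neg_mul, hkey]
    ring
  have hsub : Set.Icc (0 : ℝ) 1 ⊆ Metric.ball (0 : ℝ) R := by
    intro t ht
    rw [Metric.mem_ball, Real.dist_eq, sub_zero]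
    have h1 : |t| ≤ 1 := abs_le.2 ⟨by linarith [ht.1], ht.2⟩
    linarith
  have hconst := constant_of_has_deriv_right_zero (f := Φ) (a := 0) (b := 1)
    (fun t ht => ((hΦderiv t (hsub ht)).continuousAt).continuousWithinAt)
    (fun t ht => (hΦderiv t (hsub (Set.Ico_subset_Icc_self ht))).hasDerivWithinAt)
  have h10 : Φ 1 = Φ 0 := hconst 1 (by norm_num)
  have hf0 : f 0 = 0 := by
    rw [hf]
    simp only [hF0]
    exact tsum_zero
  have hΦ0 : Φ 0 = 1 := by
    rw [hΦ]
    simp [hf0, NormedSpace.exp_zero]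
  have h11 : NormedSpace.exp (-(f 1)) * (1 + x) = 1 := by
    have := h10.trans hΦ0
    rw [hΦ] at this
    simpa using this
  have hmain : 1 + x = NormedSpace.exp (f 1) := by
    have h := congrArg (fun y => NormedSpace.exp (f 1) * y) h11
    simp only [mul_one] at h
    letI : NormedAlgebra ℚ A := NormedAlgebra.restrictScalars ℚ ℝ A
    rw [← mul_assoc, ← NormedSpace.exp_add, add_neg_cancel, NormedSpace.exp_zero, one_mul] at h
    exact h
  have hfval : f 1 = ∑' n : ℕ, ((-1 : ℝ) ^ n / (n + 1)) • x ^ (n + 1) := by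
    show (∑' n : ℕ, F n 1) = _
    congr 1
    funext n
    rw [hF]
    simp
  rw [← hfval, ← hmain]

/-- The exponential of a tangent vector of a closed submonoid lies in it. -/
lemma aux_exp_mem {B : Type*} [NormedRing B] [NormedAlgebra ℝ B] [CompleteSpace B]
    {G : Set B} (hGclosed : IsClosed G) (hGone : (1 : B) ∈ G)
    (hGmul : ∀ x ∈ G, ∀ y ∈ G, x * y ∈ G) {u : B} (hu : u ∈ tangentSet G) :
    NormedSpace.exp u ∈ G := by
  obtain ⟨a, b, γ, ha, hb, hmem, hγ0, hd⟩ := hu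
  have hpow_mem : ∀ x ∈ G, ∀ m : ℕ, x ^ m ∈ G := by
    intro x hx m
    induction m with
    | zero => simpa using hGone
    | succ m ih => rw [pow_succ]; exact hGmul _ ih _ hx
  set β : ℝ → B := fun t => NormedSpace.exp (t • u) with hβ
  have hβd : HasDerivAt β u 0 := by
    have := hasDerivAt_exp_smul_const (𝕂 := ℝ) u 0
    simpa [hβ] using this
  have hβ0 : β 0 = 1 := by simp [hβ, NormedSpace.exp_zero]
  have hslope : ∀ (φ : ℝ → B) (v : B), HasDerivAt φ v 0 → φ 0 = 1 →
      Tendsto (fun n : ℕ => (n : ℝ) • (φ (1 / n) - 1)) atTop (𝓝 v) := by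
    intro φ v hφ h0
    have h1 : Tendsto (fun t : ℝ => t⁻¹ • (φ t - 1)) (𝓝[≠] 0) (𝓝 v) := by
      have := hasDerivAt_iff_tendsto_slope.1 hφ
      simpa [slope_fun_def, h0] using this
    have h2 : Tendsto (fun n : ℕ => ((n : ℝ))⁻¹) atTop (𝓝[≠] (0 : ℝ)) := by
      apply tendsto_nhdsWithin_of_tendsto_nhds_of_eventually_within
      · exact tendsto_inv_atTop_zero.comp tendsto_natCast_atTop_atTop
      · filter_upwards [eventually_ge_atTop 1] with n hn
        have : (0 : ℝ) < n := by exact_mod_cast Nat.lt_of_lt_of_le Nat.zero_lt_one hn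
        simp [Set.mem_compl_singleton_iff]
        positivity
    have h3 := h1.comp h2
    simpa [Function.comp_def, one_div, inv_inv] using h3
  have hA := hslope γ u hd hγ0
  have hB := hslope β u hβd hβ0
  have hAB : Tendsto (fun n : ℕ => (n : ℝ) • (γ (1 / n) - β (1 / n))) atTop (𝓝 0) := by
    have := hA.sub hB
    simpa [← smul_sub, sub_sub_sub_cancel_right, sub_self] using this
  set C : ℝ := ‖u‖ + 1 with hC
  set D : ℝ := ‖(1 : B)‖ + Real.exp C with hD
  have hAev : ∀ᶠ n : ℕ in atTop, ‖γ (1 / n) - 1‖ * n ≤ C := by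
    have h := (hA.norm.eventually_lt_const (show ‖u‖ < C by rw [hC]; linarith))
    filter_upwards [h] with n hn
    rw [norm_smul, Real.norm_natCast] at hn
    nlinarith [hn]
  have hBev : ∀ᶠ n : ℕ in atTop, ‖β (1 / n) - 1‖ * n ≤ C := by
    have h := (hB.norm.eventually_lt_const (show ‖u‖ < C by rw [hC]; linarith))
    filter_upwards [h] with n hn
    rw [norm_smul, Real.norm_natCast] at hn
    nlinarith [hn]
  have hTends : Tendsto (fun n : ℕ => γ (1 / n) ^ n) atTop (𝓝 (NormedSpace.exp u)) := by
    rw [← tendsto_sub_nhds_zero_iff]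
    apply squeeze_zero_norm'
      (a := fun n : ℕ => (D * D) * ‖(n : ℝ) • (γ (1 / n) - β (1 / n))‖)
    · filter_upwards [hAev, hBev, eventually_ge_atTop 1] with n hAn hBn hn1
      have hn0 : ((n : ℝ)) ≠ 0 := by
        have : (0 : ℝ) < n := by exact_mod_cast Nat.lt_of_lt_of_le Nat.zero_lt_one hn1
        linarith
      have hβn : β (1 / n) ^ n = NormedSpace.exp u := by
        rw [hβ]
        simp only
        letI : NormedAlgebra ℚ B := NormedAlgebra.restrictScalars ℚ ℝ B
        rw [← NormedSpace.exp_nsmul]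
        congr 1
        rw [← Nat.cast_smul_eq_nsmul ℝ, smul_smul]
        rw [mul_one_div_cancel hn0, one_smul]
      rw [← hβn]
      have key := aux_norm_pow_sub_pow_le (γ (1 / n)) (β (1 / n)) D n
        (fun i hi => aux_pow_norm_le hAn hi)
        (fun i hi => aux_pow_norm_le hBn hi)
      calc ‖γ (1 / n) ^ n - β (1 / n) ^ n‖
          ≤ n * (D * D) * ‖γ (1 / n) - β (1 / n)‖ := key
        _ = (D * D) * ‖(n : ℝ) • (γ (1 / n) - β (1 / n))‖ := by
            rw [norm_smul, Real.norm_natCast]; ring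
    · have := hAB.norm.const_mul (D * D)
      simpa using this
  have hmemev : ∀ᶠ n : ℕ in atTop, γ (1 / n) ^ n ∈ G := by
    have hbev : ∀ᶠ n : ℕ in atTop, (1 / (n : ℝ)) < b :=
      tendsto_one_div_atTop_nhds_zero_nat.eventually_lt_const hb
    filter_upwards [hbev, eventually_ge_atTop 1] with n h1 h2
    have hn0 : (0 : ℝ) < n := by exact_mod_cast Nat.lt_of_lt_of_le Nat.zero_lt_one h2
    have hγmem : γ (1 / n) ∈ G := hmem _ ⟨lt_trans ha (by positivity), h1⟩
    exact hpow_mem _ hγmem n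
  exact hGclosed.mem_of_tendsto hTends hmemev

set_option maxHeartbeats 1000000 in
set_option synthInstance.maxHeartbeats 400000 in
/-- If `‖g - 1‖ < 1` and `log g = ∑_{n≥1} (-1)^{n+1}(g-1)^n/n ∈ L(G)`, then `g ∈ G`. -/
theorem stmt11
    {B : Type*} [NormedRing B] [NormedAlgebra ℝ B] [CompleteSpace B]
    (G : Set B) (hGclosed : IsClosed G)
    (hGone : (1 : B) ∈ G)
    (hGmul : ∀ x ∈ G, ∀ y ∈ G, x * y ∈ G)
    (hGinv : ∀ x ∈ G, ∃ y ∈ G, x * y = 1 ∧ y * x = 1)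
    (g : B) (hg : ‖g - 1‖ < 1)
    (hlog : (∑' n : ℕ, ((-1 : ℝ) ^ n / (n + 1)) • (g - 1) ^ (n + 1)) ∈ tangentSet G) :
    g ∈ G := by
  have hexpmem := aux_exp_mem hGclosed hGone hGmul hlog
  suffices h : NormedSpace.exp (∑' n : ℕ, ((-1 : ℝ) ^ n / (n + 1)) • (g - 1) ^ (n + 1)) = g by
    rwa [h] at hexpmem
  set x : B := g - 1 with hx
  set A : Subalgebra ℝ B := Algebra.elemental ℝ x with hA
  letI : NormedCommRing A := { (inferInstance : NormedRing A) with mul_comm := mul_comm }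
  set xA : A := ⟨x, Algebra.elemental.self_mem ℝ x⟩ with hxA
  have hxAnorm : ‖xA‖ < 1 := hg
  have hbound : ∀ n : ℕ, ‖((-1 : ℝ) ^ n / (n + 1)) • xA ^ (n + 1)‖ ≤ ‖xA‖ * ‖xA‖ ^ n := by
    intro n
    rw [norm_smul, Real.norm_eq_abs]
    have h1 : |(-1 : ℝ) ^ n / (n + 1)| ≤ 1 := by
      rw [abs_div, abs_pow, abs_neg, abs_one, one_pow]
      rw [div_le_one (by positivity)]
      rw [abs_of_pos (by positivity)]
      linarith [Nat.cast_nonneg (α := ℝ) n]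
    have h2 : ‖xA ^ (n + 1)‖ ≤ ‖xA‖ ^ (n + 1) := norm_pow_le' xA n.succ_pos
    calc |(-1 : ℝ) ^ n / (n + 1)| * ‖xA ^ (n + 1)‖
        ≤ 1 * ‖xA‖ ^ (n + 1) := mul_le_mul h1 h2 (norm_nonneg _) one_pos.le
      _ = ‖xA‖ * ‖xA‖ ^ n := by rw [one_mul, pow_succ]; ring
  have hsumA : Summable (fun n : ℕ => ((-1 : ℝ) ^ n / (n + 1)) • xA ^ (n + 1)) :=
    Summable.of_norm (((summable_geometric_of_lt_one (norm_nonneg xA)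
      hxAnorm).mul_left ‖xA‖).of_nonneg_of_le (fun n => norm_nonneg _) hbound)
  set uA : A := ∑' n : ℕ, ((-1 : ℝ) ^ n / (n + 1)) • xA ^ (n + 1) with huA
  have hvalcont : Continuous (A.val : A → B) := continuous_subtype_val
  have hcoe : (uA : B) = ∑' n : ℕ, ((-1 : ℝ) ^ n / (n + 1)) • x ^ (n + 1) := by
    have h2 := hsumA.hasSum.map A.val hvalcont
    have h3 : (A.val ∘ fun n : ℕ => ((-1 : ℝ) ^ n / (n + 1)) • xA ^ (n + 1))
        = fun n : ℕ => ((-1 : ℝ) ^ n / (n + 1)) • x ^ (n + 1) := by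
      funext n
      simp only [Function.comp_apply, map_smul, map_pow]
      rfl
    rw [h3] at h2
    exact h2.tsum_eq.symm
  have hexpA : NormedSpace.exp uA = 1 + xA := aux_exp_log xA hxAnorm
  letI : NormedAlgebra ℚ B := NormedAlgebra.restrictScalars ℚ ℝ B
  letI : NormedAlgebra ℚ A := NormedAlgebra.restrictScalars ℚ ℝ A
  calc NormedSpace.exp (∑' n : ℕ, ((-1 : ℝ) ^ n / (n + 1)) • (g - 1) ^ (n + 1))
      = NormedSpace.exp ((uA : B)) := by rw [hcoe]
    _ = ((NormedSpace.exp uA : A) : B) := (map_exp A.val hvalcont uA).symm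
    _ = ((1 + xA : A) : B) := by rw [hexpA]
    _ = 1 + x := by push_cast; rfl
    _ = g := by rw [hx]; abel
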